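/- For every l ∈ {1,...,k} and every x ∈ {l+1,...,n-1}, one has (x + 1 - l) · c_l(x) - x · c_l(x+1) = C(n-x-1, k-l) / (l! · C(n,k)). -/

import Mathlib

open Finset

namespace Secretary

/-- Binomial coefficient on integers: zero when `b < 0` or `b > a`. -/
noncomputable def Cb (a b : ℤ) : ℝ :=
  if 0 ≤ b ∧ b ≤ a then (Nat.choose a.toNat b.toNat : ℝ) else 0

/-- The value `π(i)` of a permutation of `{1,...,n}` in 1-based indexing. -/
def pv (n : ℕ) (π : Equiv.Perm (Fin n)) (i : ℕ) : ℕ :=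
  if h : i - 1 < n then ((π ⟨i - 1, h⟩ : Fin n) : ℕ) + 1 else 0

/-- The relative rank `ρ_π(i)`: the number of `j ∈ {1,...,i}` with `π(j) ≤ π(i)`. -/
def rho (n : ℕ) (π : Equiv.Perm (Fin n)) (i : ℕ) : ℕ :=
  ((Finset.Icc 1 i).filter fun j => pv n π j ≤ pv n π i).card

/-- Extension of a sequence `s` with `s (k+1) = n - 1`. -/
def sExt (n k : ℕ) (s : ℕ → ℕ) (l : ℕ) : ℕ := if l = k + 1 then n - 1 else s l

/-- `i` is a `(π, l, w)`-element. -/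
def IsElem (n k : ℕ) (s : ℕ → ℕ) (π : Equiv.Perm (Fin n)) (l i : ℕ) : Prop :=
  sExt n k s l < i ∧ i ≤ sExt n k s (l + 1) ∧ rho n π i ≤ l

/-- `l` is a `w`-threshold of `π`. -/
def IsThreshold (n k : ℕ) (s : ℕ → ℕ) (π : Equiv.Perm (Fin n)) (l : ℕ) : Prop :=
  1 ≤ l ∧ l ≤ k ∧ ∃ i, IsElem n k s π l i

open Classical in
/-- `π` is a lucky permutation for the sequence `w = s`. -/
def Lucky (n k : ℕ) (s : ℕ → ℕ) (π : Equiv.Perm (Fin n)) : Prop :=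
  if ∃ l, IsThreshold n k s π l then
    pv n π (sInf {i | IsElem n k s π (sInf {l | IsThreshold n k s π l}) i}) ≤ k
  else pv n π n ≤ k

/-- The maps `r_l` (first argument an integer `l ≤ k`). -/
noncomputable def rr (n k : ℕ) (l : ℤ) (x : ℕ) : ℝ :=
  if l < 0 then 0
  else if l = 0 then
    1 / (x : ℝ) - (k : ℝ) / n - Cb ((n : ℤ) - x - 1) k / ((x : ℝ) * Cb n k)
      - (1 / Cb n k) * ∑ j ∈ Finset.Icc 1 x, Cb ((n : ℤ) - j - 1) ((k : ℤ) - 1) / (j : ℝ)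
  else
    ((Nat.factorial (x - l.toNat - 1) : ℝ) / (Nat.factorial x : ℝ)) *
      (1 - (1 / ((l : ℝ) * Cb n x)) *
        ∑ j ∈ Finset.range (l.toNat + 1),
          ((l : ℝ) - j) * Cb k j * Cb ((n : ℤ) - k) ((x : ℤ) - j))

/-- The constant `δ_{k,n}`. -/
noncomputable def delta (n k : ℕ) : ℝ :=
  if k = 1 then -(1 / (n : ℝ)) * ∑ j ∈ Finset.Icc 1 (n - 1), (1 : ℝ) / j
  else (Nat.factorial (n - k) : ℝ) / (Nat.factorial n : ℝ)

/-- The maps `d_l` for `0 ≤ l ≤ k`. -/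
noncomputable def d (n k : ℕ) (l x : ℕ) : ℝ :=
  if l = 0 then
    -1 + (k : ℝ) * x / n + Cb ((n : ℤ) - x - 1) k / Cb n k
      + ((x : ℝ) / Cb n k) * ∑ j ∈ Finset.Icc 1 x, Cb ((n : ℤ) - j - 1) ((k : ℤ) - 1) / (j : ℝ)
  else if l = 1 then
    -((k : ℝ) / n) - (1 / Cb n k) * ∑ j ∈ Finset.Icc 1 x, Cb ((n : ℤ) - j - 1) ((k : ℤ) - 1) / (j : ℝ)
  else
    ((k : ℝ) * (Nat.factorial x : ℝ) * (Nat.factorial (n - l - x) : ℝ) /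
        ((l : ℝ) * ((l : ℝ) - 1) * (Nat.factorial n : ℝ))) *
      ∑ j ∈ Finset.range (l - 1), Cb ((k : ℤ) - 1) j * Cb ((n : ℤ) - k) ((x : ℤ) + l - j - 1)

/-- The maps `c_l(x) = d_l(x - l)`. -/
noncomputable def c (n k l x : ℕ) : ℝ := d n k l (x - l)

/-- The constant `ξ_{k,n}`. -/
noncomputable def xi (n k : ℕ) : ℝ :=
  (k : ℝ) * (Nat.factorial (n - k - 1) : ℝ) / (Nat.factorial n : ℝ)

/-- `w` (given as a 1-indexed function) is a word in `X^{(k-l)}`, i.e. its `j`-th letter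
belongs to `X_{l+j} = {l+j, ..., n-1}` for `1 ≤ j ≤ k - l`. -/
def memX (n k l : ℕ) (w : ℕ → ℕ) : Prop :=
  ∀ j ∈ Finset.Icc 1 (k - l), l + j ≤ w j ∧ w j ≤ n - 1

/-- The left-shift operator removing the first `l` letters of a word. -/
def shift (l : ℕ) (w : ℕ → ℕ) : ℕ → ℕ := fun j => w (l + j)

/-- The maps `R_{l,j}`. -/
noncomputable def Rmap (n k l : ℕ) (w : ℕ → ℕ) (j : ℕ) : ℝ :=
  if 1 ≤ j ∧ j ≤ k - l then
    rr n k ((l : ℤ) + j - 1) (w j)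
      - rr n k ((l : ℤ) + j - 1) (if j = k - l then n - 1 else w (j + 1))
  else 0

/-- The maps `Γ_{l,j,j'}`. -/
noncomputable def Gam (n k l j j' : ℕ) (w : ℕ → ℕ) : ℝ :=
  if 1 ≤ j ∧ j ≤ j' ∧ j' ≤ k - l then
    ∏ t ∈ Finset.Icc j j', ((w t : ℝ) - l - t + 1)
  else 1

/-- The maps `T_l`. -/
noncomputable def Tmap (n k l : ℕ) (w : ℕ → ℕ) : ℝ :=
  (∑ j ∈ Finset.Icc 1 (k - l), Rmap n k l w j * Gam n k l 1 j w)
    + xi n k * Gam n k l 1 (k - l) w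

/-- The maps `D_l(w) = r_{l-1}(x_1) - T_l(w)`, with `x_1 := n-1` when `l = k`. -/
noncomputable def Dmap (n k l : ℕ) (w : ℕ → ℕ) : ℝ :=
  rr n k ((l : ℤ) - 1) (if l = k then n - 1 else w 1) - Tmap n k l w

/-- The maps `F_{l,w}(x) = -c_{l-1}(x) - x·D_l(w)`. -/
noncomputable def Fmap (n k l : ℕ) (w : ℕ → ℕ) (x : ℕ) : ℝ :=
  -(c n k (l - 1) x) - (x : ℝ) * Dmap n k l w

/-- The maps `a_l`. -/
noncomputable def amap (n k l x : ℕ) : ℝ :=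
  (1 / Cb n x) * ∑ j ∈ Finset.range (l + 1), Cb k j * Cb ((n : ℤ) - k) ((x : ℤ) - j)

/-- The maps `b_l`. -/
noncomputable def bmap (n k l x : ℕ) : ℝ :=
  (1 / ((l : ℝ) * Cb n x)) *
    ∑ j ∈ Finset.range (l + 1), (j : ℝ) * Cb k j * Cb ((n : ℤ) - k) ((x : ℤ) - j)

/-- `π ∈ S(l0, i0)`: `π` is lucky for `s`, `l0` is the smallest `s`-threshold of `π`,
and `i0` is the smallest `(π, l0, s)`-element. -/
def SMem (n k : ℕ) (s : ℕ → ℕ) (l0 i0 : ℕ) (π : Equiv.Perm (Fin n)) : Prop :=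
  Lucky n k s π ∧ IsLeast {l | IsThreshold n k s π l} l0 ∧
    IsLeast {i | IsElem n k s π l0 i} i0

/-- `π ∈ S(Y, Y', l0, i0)`. -/
def SYYMem (n k : ℕ) (s : ℕ → ℕ) (Y Y' : Finset ℕ) (l0 i0 : ℕ) (π : Equiv.Perm (Fin n)) :
    Prop :=
  SMem n k s l0 i0 π ∧ ((Finset.Icc 1 i0).image (pv n π)) ∩ Finset.Icc 1 k = Y ∧
    ((Finset.Icc 1 i0).image (pv n π)) ∩ Finset.Icc (k + 1) n = Y'

open Nat

/-
The case `l = 1` telescopes: `C(n,k) (d_1(y) - d_1(y+1))` is the last summand of the sum in `d_1`.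
For `l ≥ 2` write `x = y + l` and `n = y + l + p + 1`; after clearing the factorials the claim
reduces to the recurrence `(a + c - m) Σ_{j<L} C(c,j) C(a,m-j) = (m+1) Σ_{j<L} C(c,j) C(a,m+1-j)
+ L C(c,L) C(a,m+1-L)` for truncated Vandermonde sums (with `a = n-k`, `c = k-1`, `L = l-1`), whose
boundary term is then a factorial identity.
-/

lemma Cb_natCast (a b : ℕ) : Cb a b = a.choose b := by
  unfold Cb
  rcases le_or_gt b a with h | h
  · rw [if_pos ⟨Int.natCast_nonneg b, by exact_mod_cast h⟩]
    simp
  · rw [if_neg (by rintro ⟨-, hb⟩; omega), Nat.choose_eq_zero_of_lt h]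
    simp

lemma succ_mul_cast_choose_succ (a b : ℕ) :
    ((b : ℝ) + 1) * a.choose (b + 1) = ((a : ℝ) - b) * a.choose b := by
  rcases le_or_gt b a with h | h
  · have h2 : ((a.choose (b + 1) * (b + 1) : ℕ) : ℝ) = ((a.choose b * (a - b) : ℕ) : ℝ) :=
      congrArg _ (Nat.choose_succ_right_eq a b)
    push_cast [h] at h2
    linarith
  · rw [Nat.choose_eq_zero_of_lt h, Nat.choose_eq_zero_of_lt (by omega)]
    ring

lemma sum_range_choose_mul_choose_recurrence (a c L m : ℕ) (hLm : L ≤ m) :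
    ((a : ℝ) + c - m) * ∑ j ∈ range L, (c.choose j : ℝ) * a.choose (m - j) =
      ((m : ℝ) + 1) * ∑ j ∈ range L, (c.choose j : ℝ) * a.choose (m + 1 - j)
        + L * c.choose L * a.choose (m + 1 - L) := by
  induction L with
  | zero => simp
  | succ L ih =>
    have hL : L ≤ m := by omega
    have ha := succ_mul_cast_choose_succ a (m - L)
    rw [show m - L + 1 = m + 1 - L by omega, Nat.cast_sub hL] at ha
    rw [sum_range_succ, sum_range_succ, mul_add, mul_add, ih hL,
      show m + 1 - (L + 1) = m - L by omega]
    push_cast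
    linear_combination
      (-(c.choose L : ℝ)) * ha - (a.choose (m - L) : ℝ) * succ_mul_cast_choose_succ c L

lemma succ_mul_sub_d_one_succ (n k y : ℕ) :
    ((y : ℝ) + 1) * (d n k 1 y - d n k 1 (y + 1)) =
      Cb ((n : ℤ) - (y + 1 : ℕ) - 1) ((k : ℤ) - 1) / Cb n k := by
  simp only [d, one_ne_zero, if_false, if_true, sum_Icc_succ_top (Nat.le_add_left 1 y)]
  have hy : (y : ℝ) + 1 ≠ 0 := by positivity
  push_cast
  field_simp
  ring

lemma d_eq_of_two_le {n k l : ℕ} (hl : 2 ≤ l) (hk : 1 ≤ k) (hkn : k ≤ n) (y : ℕ) :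
    d n k l y = k * y ! * (n - l - y)! / (l * (l - 1) * n !) *
      ∑ j ∈ range (l - 1), ((k - 1).choose j : ℝ) * (n - k).choose (y + l - 1 - j) := by
  rw [d, if_neg (by omega), if_neg (by omega)]
  congr 1
  refine sum_congr rfl fun j hj => ?_
  rw [mem_range] at hj
  rw [← Cb_natCast, ← Cb_natCast]
  push_cast [hk, hkn, show j ≤ y + l - 1 by omega, show 1 ≤ y + l by omega]
  ring_nf

lemma factorial_mul_choose_mul_choose_eq {n k l y p : ℕ} (hl : 1 ≤ l) (hlk : l ≤ k)
    (hn : n = y + l + p + 1) :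
    (k : ℝ) * (y + 1)! * p ! * (k - 1).choose (l - 1) * (n - k).choose (y + 1) * l !
        * n.choose k = l * n ! * p.choose (k - l) := by
  rcases le_or_gt (k - l) p with h | h
  · rw [Nat.cast_choose ℝ (show l - 1 ≤ k - 1 by omega),
      Nat.cast_choose ℝ (show y + 1 ≤ n - k by omega),
      Nat.cast_choose ℝ (show k ≤ n by omega),
      Nat.cast_choose ℝ h, show k - 1 - (l - 1) = k - l by omega,
      show n - k - (y + 1) = p - (k - l) by omega]
    have hk : (k ! : ℝ) = k * (k - 1)! := by
      exact_mod_cast (Nat.mul_factorial_pred (by omega)).symm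
    have hl : (l ! : ℝ) = l * (l - 1)! := by
      exact_mod_cast (Nat.mul_factorial_pred (by omega)).symm
    have hk0 : (k : ℝ) ≠ 0 := by exact_mod_cast (show k ≠ 0 by omega)
    rw [hk, hl]
    field_simp
  · rw [Nat.choose_eq_zero_of_lt h, Nat.choose_eq_zero_of_lt (show n - k < y + 1 by omega)]
    simp

lemma succ_mul_d_sub_mul_d_succ {n k l y p : ℕ} (hl : 2 ≤ l) (hlk : l ≤ k) (hkn : k ≤ n)
    (hn : n = y + l + p + 1) :
    ((y : ℝ) + 1) * d n k l y - ((y : ℝ) + l) * d n k l (y + 1) =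
      p.choose (k - l) / (l ! * n.choose k) := by
  rw [d_eq_of_two_le hl (by omega) hkn, d_eq_of_two_le hl (by omega) hkn,
    show n - l - y = p + 1 by omega, show n - l - (y + 1) = p by omega,
    show y + 1 + l - 1 = y + l by omega]
  set S₀ := ∑ j ∈ range (l - 1), ((k - 1).choose j : ℝ) * (n - k).choose (y + l - 1 - j)
  set S₁ := ∑ j ∈ range (l - 1), ((k - 1).choose j : ℝ) * (n - k).choose (y + l - j)
  have hrec :=
    sum_range_choose_mul_choose_recurrence (n - k) (k - 1) (l - 1) (y + l - 1) (by omega)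
  rw [show y + l - 1 + 1 = y + l by omega, show y + l - (l - 1) = y + 1 by omega] at hrec
  push_cast [hkn, show 1 ≤ k by omega, show 1 ≤ l by omega, show 1 ≤ y + l by omega] at hrec
  have hnR : (n : ℝ) = y + l + p + 1 := by exact_mod_cast hn
  have hS : ((p : ℝ) + 1) * S₀ - (y + l) * S₁ =
      (l - 1) * (k - 1).choose (l - 1) * (n - k).choose (y + 1) := by
    rw [hnR] at hrec
    linear_combination hrec
  have hl' : (l : ℝ) * (l - 1) ≠ 0 := by
    have : (2 : ℝ) ≤ l := by exact_mod_cast hl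
    nlinarith
  have hnk : (n.choose k : ℝ) ≠ 0 := by exact_mod_cast (Nat.choose_pos hkn).ne'
  calc ((y : ℝ) + 1) * (k * y ! * (p + 1)! / (l * (l - 1) * n !) * S₀)
        - (y + l) * (k * (y + 1)! * p ! / (l * (l - 1) * n !) * S₁)
      = k * (y + 1)! * p ! / (l * (l - 1) * n !) * ((p + 1) * S₀ - (y + l) * S₁) := by
        push_cast [Nat.factorial_succ]
        ring
    _ = p.choose (k - l) / (l ! * n.choose k) := by
        rw [hS, div_mul_eq_mul_div, div_eq_div_iff (by positivity) (by positivity)]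
        linear_combination ((l : ℝ) - 1) * factorial_mul_choose_mul_choose_eq (by omega) hlk hn

theorem c_diff_general (n k : ℕ) (hkn : k < n) :
    ∀ l ∈ Finset.Icc 1 k, ∀ x ∈ Finset.Icc (l + 1) (n - 1),
      ((x : ℝ) + 1 - l) * c n k l x - (x : ℝ) * c n k l (x + 1) =
        Cb ((n : ℤ) - x - 1) ((k : ℤ) - l) / ((Nat.factorial l : ℝ) * Cb n k) := by
  intro l hl x hx
  rw [mem_Icc] at hl hx
  obtain ⟨y, rfl⟩ : ∃ y, x = y + l := ⟨x - l, by omega⟩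
  unfold c
  rw [Nat.add_sub_cancel, show y + l + 1 - l = y + 1 by omega]
  rcases hl.1.eq_or_lt with rfl | hl2
  · simp only [Nat.factorial_one, Nat.cast_one, one_mul]
    rw [← succ_mul_sub_d_one_succ]
    push_cast
    ring
  · obtain ⟨p, hp⟩ : ∃ p, n = y + l + p + 1 := ⟨n - (y + l) - 1, by omega⟩
    rw [show ((n : ℤ) - (y + l : ℕ) - 1) = p by omega,
      show (k : ℤ) - l = (k - l : ℕ) by omega,
      Cb_natCast, Cb_natCast, ← succ_mul_d_sub_mul_d_succ hl2 hl.2 hkn.le hp]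
    push_cast
    ring

theorem c_diff (n k : ℕ) (hk : 1 ≤ k) (hkn : k < n) :
    ∀ l ∈ Finset.Icc 1 k, ∀ x ∈ Finset.Icc (l + 1) (n - 1),
      ((x : ℝ) + 1 - l) * c n k l x - (x : ℝ) * c n k l (x + 1) =
        Cb ((n : ℤ) - x - 1) ((k : ℤ) - l) / ((Nat.factorial l : ℝ) * Cb n k) :=
  c_diff_general n k hkn
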